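/- arXiv:2409.09854 — 3 statements merged into one kernel-verified Lean document; each statement's English description precedes it below -/
import Mathlib

section
/- In a BCK-algebra, if a is an atom (a minimal nonzero element) and for some b the element (b\a)\((b\a)\a) equals a, then setting 1 = b\((b\a)\a) and ½ = a, the set {0, ½, 1} is a subalgebra isomorphic to the Łukasiewicz chain Ł₃ (i.e., 1\½ = ½, ½\1 = 0, 1 ≠ ½ ≠ 0). -/
structure BCK (A : Type*) where
  zero : A
  sub : A → A → A
  ax1 : ∀ x y z, sub (sub (sub x y) (sub x z)) (sub z y) = zero
  ax2 : ∀ x, sub x zero = x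
  ax3 : ∀ x, sub zero x = zero
  ax4 : ∀ x y, sub x y = zero → sub y x = zero → x = y

def BCK.le {A : Type*} (B : BCK A) (a b : A) : Prop := B.sub a b = B.zero

/-- a is an atom: a minimal nonzero element. -/
def BCK.IsAtom {A : Type*} (B : BCK A) (a : A) : Prop :=
  a ≠ B.zero ∧ ∀ x : A, B.le x a → (x = B.zero ∨ x = a)

namespace BCK

variable {A : Type*} (B : BCK A)

lemma sub_self (x : A) : B.sub x x = B.zero := by
  have h := B.ax1 x B.zero B.zero
  simp only [B.ax2, B.ax3] at h; exact h

lemma l4 (x z : A) : B.sub (B.sub x (B.sub x z)) z = B.zero := by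
  have h := B.ax1 x B.zero z
  rwa [B.ax2, B.ax2] at h

lemma mono1 {x y : A} (h : B.sub x y = B.zero) (z : A) :
    B.sub (B.sub x z) (B.sub y z) = B.zero := by
  have h1 := B.ax1 x z y
  rwa [h, B.ax2] at h1

lemma mono2 {x y : A} (h : B.sub x y = B.zero) (z : A) :
    B.sub (B.sub z y) (B.sub z x) = B.zero := by
  have h1 := B.ax1 z y x
  rwa [h, B.ax2] at h1

lemma le_trans {x y z : A} (h1 : B.sub x y = B.zero) (h2 : B.sub y z = B.zero) :
    B.sub x z = B.zero := by
  have h := B.mono1 h1 z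
  rwa [h2, B.ax2] at h

lemma ex_le (x y z : A) :
    B.sub (B.sub (B.sub x y) z) (B.sub (B.sub x z) y) = B.zero := by
  have h1 : B.sub (B.sub (B.sub x y) z) (B.sub (B.sub x y) (B.sub x (B.sub x z)))
      = B.zero := B.mono2 (B.l4 x z) (B.sub x y)
  have h2 := B.ax1 x y (B.sub x z)
  exact B.le_trans h1 h2

lemma exchange (x y z : A) :
    B.sub (B.sub x y) z = B.sub (B.sub x z) y :=
  B.ax4 _ _ (B.ex_le x y z) (B.ex_le x z y)

end BCK

theorem bck_atom_lukasiewicz_case {A : Type*} (B : BCK A) (a b : A)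
    (ha : B.IsAtom a)
    (hcase : B.sub (B.sub b a) (B.sub (B.sub b a) a) = a) :
    B.sub (B.sub b (B.sub (B.sub b a) a)) a = a ∧
    B.sub a (B.sub b (B.sub (B.sub b a) a)) = B.zero ∧
    B.sub b (B.sub (B.sub b a) a) ≠ a ∧ a ≠ B.zero ∧
    (∀ x ∈ ({B.zero, a, B.sub b (B.sub (B.sub b a) a)} : Set A),
     ∀ y ∈ ({B.zero, a, B.sub b (B.sub (B.sub b a) a)} : Set A),
      B.sub x y ∈ ({B.zero, a, B.sub b (B.sub (B.sub b a) a)} : Set A)) := by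
  set c := B.sub b a with hc
  set d := B.sub c a with hd
  set e := B.sub b d with he
  -- 1 : e \ a = a
  have h1 : B.sub e a = a := by
    rw [he, B.exchange b d a]; exact hcase
  -- 2 : a \ e = 0
  have h2 : B.sub a e = B.zero := by
    have hcb : B.sub c b = B.zero := by
      have := B.ax1 b a B.zero
      rwa [B.ax2, B.ax3, B.ax2, ← hc] at this
    have := B.mono1 hcb d
    rw [hcase] at this; exact this
  -- 3 : e ≠ a
  have h3 : e ≠ a := by
    intro h
    rw [h, B.sub_self] at h1
    exact ha.1 h1.symm
  refine ⟨h1, h2, h3, ha.1, ?_⟩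
  intro x hx y hy
  have haa := B.sub_self a
  have hee := B.sub_self e
  simp only [Set.mem_insert_iff, Set.mem_singleton_iff] at hx hy ⊢
  rcases hx with rfl | rfl | rfl <;> rcases hy with rfl | rfl | rfl <;>
    simp [B.ax2, B.ax3, haa, hee, h1, h2]
end

section
/- In a BCK-algebra, if a is an atom and for some b the element (b\a)\((b\a)\a) equals 0 with b\a ≠ 0 and b\a ≠ a, then b\a = (b\a)\a, and {0, a, b\a} is a subalgebra isomorphic to the Heyting chain H₃ (i.e., (b\a)\a = b\a). -/
theorem bck_atom_heyting_case {A : Type*} (B : BCK A) (a b : A)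
    (ha : B.IsAtom a)
    (hcase : B.sub (B.sub b a) (B.sub (B.sub b a) a) = B.zero)
    (hne0 : B.sub b a ≠ B.zero) (hnea : B.sub b a ≠ a) :
    B.sub b a = B.sub (B.sub b a) a ∧
    (∀ x ∈ ({B.zero, a, B.sub b a} : Set A), ∀ y ∈ ({B.zero, a, B.sub b a} : Set A),
      B.sub x y ∈ ({B.zero, a, B.sub b a} : Set A)) := by
  have hsubself : ∀ x y, B.sub (B.sub x y) x = B.zero := by
    intro x y
    have h := B.ax1 x y B.zero
    simp only [B.ax2, B.ax3] at h
    exact h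
  have hxx : ∀ x, B.sub x x = B.zero := by
    intro x
    have h := B.ax1 x B.zero B.zero
    simp only [B.ax2, B.ax3] at h
    exact h
  have heq : B.sub b a = B.sub (B.sub b a) a :=
    B.ax4 _ _ hcase (hsubself (B.sub b a) a)
  refine ⟨heq, ?_⟩
  have hac : B.sub a (B.sub b a) = B.zero ∨ B.sub a (B.sub b a) = a :=
    ha.2 _ (hsubself a (B.sub b a))
  intro x hx y hy
  simp only [Set.mem_insert_iff, Set.mem_singleton_iff] at hx hy ⊢
  rcases hx with rfl | rfl | rfl <;> rcases hy with rfl | rfl | rfl <;>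
    first
      | (simp only [B.ax2, B.ax3, hxx]; tauto)
      | tauto
end

section
/- If A is a subdirectly irreducible BCK-algebra with an atom, then A has a subalgebra isomorphic to Ł₃ or to H₃. -/
def BCK.IsIdeal {A : Type*} (B : BCK A) (I : Set A) : Prop :=
  B.zero ∈ I ∧ ∀ a b : A, b ∈ I → B.sub a b ∈ I → a ∈ I

namespace BCKaux

variable {A : Type*} (B : BCK A)

lemma dd (x z : A) : B.sub (B.sub x (B.sub x z)) z = B.zero := by
  have h := B.ax1 x B.zero z
  rwa [B.ax2, B.ax2] at h

lemma sub_self (x : A) : B.sub x x = B.zero := by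
  have h := dd B x B.zero
  rwa [B.ax2, B.ax2] at h

lemma sub_le_self (x y : A) : B.sub (B.sub x y) x = B.zero := by
  have h := B.ax1 x y B.zero
  rwa [B.ax2, B.ax3, B.ax2] at h

lemma le_trans {x y z : A} (h1 : B.sub x y = B.zero) (h2 : B.sub y z = B.zero) :
    B.sub x z = B.zero := by
  have h := B.ax1 x z y
  rwa [h1, B.ax2, h2, B.ax2] at h

lemma mono1 {s t : A} (h : B.sub s t = B.zero) (w : A) :
    B.sub (B.sub s w) (B.sub t w) = B.zero := by
  have h' := B.ax1 s w t
  rwa [h, B.ax2] at h'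

lemma anti2 {s t : A} (h : B.sub s t = B.zero) (u : A) :
    B.sub (B.sub u t) (B.sub u s) = B.zero := by
  have h' := B.ax1 u t s
  rwa [h, B.ax2] at h'

lemma exch_le (x y z : A) : B.sub (B.sub (B.sub x y) z) (B.sub (B.sub x z) y) = B.zero := by
  have h1 : B.sub (B.sub (B.sub x y) z) (B.sub (B.sub x y) (B.sub x (B.sub x z))) = B.zero :=
    anti2 B (dd B x z) (B.sub x y)
  have h2 := B.ax1 x y (B.sub x z)
  exact le_trans B h1 h2

lemma exch (x y z : A) : B.sub (B.sub x y) z = B.sub (B.sub x z) y :=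
  B.ax4 _ _ (exch_le B x y z) (exch_le B x z y)

/-- iterated subtraction of b, n times -/
def subIter (x b : A) : ℕ → A
  | 0 => x
  | n+1 => B.sub (subIter x b n) b

lemma subIter_sub (x y b : A) (n : ℕ) :
    B.sub (subIter B x b n) y = subIter B (B.sub x y) b n := by
  induction n with
  | zero => rfl
  | succ n ih =>
    simp only [subIter]
    rw [exch B _ b y, ih]

lemma subIter_add (x b : A) (m n : ℕ) :
    subIter B x b (m + n) = subIter B (subIter B x b m) b n := by
  induction n with
  | zero => rfl
  | succ n ih =>
    have : m + (n + 1) = (m + n) + 1 := rfl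
    rw [this]
    simp only [subIter, ih]

lemma subIter_zero (b : A) (n : ℕ) : subIter B B.zero b n = B.zero := by
  induction n with
  | zero => rfl
  | succ n ih => simp only [subIter, ih, B.ax3]

lemma subIter_le_self (x b : A) (n : ℕ) : B.sub (subIter B x b n) x = B.zero := by
  induction n with
  | zero => exact sub_self B x
  | succ n ih => exact le_trans B (sub_le_self B (subIter B x b n) b) ih

lemma subIter_mono {s t : A} (h : B.sub s t = B.zero) (b : A) (n : ℕ) :
    B.sub (subIter B s b n) (subIter B t b n) = B.zero := by
  induction n with
  | zero => exact h
  | succ n ih => exact mono1 B ih b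

/-- the ideal generated by b -/
def genIdeal (b : A) : Set A := {x | ∃ n, subIter B x b n = B.zero}

lemma genIdeal_isIdeal (b : A) : B.IsIdeal (genIdeal B b) := by
  constructor
  · exact ⟨0, rfl⟩
  · rintro x y ⟨n, hn⟩ ⟨m, hm⟩
    refine ⟨m + n, ?_⟩
    have key : B.sub (subIter B x b m) y = B.zero := by
      rw [subIter_sub]; exact hm
    have h2 : B.sub (subIter B (subIter B x b m) b n) (subIter B y b n) = B.zero :=
      subIter_mono B key b n
    rw [hn, B.ax2] at h2
    rw [subIter_add]; exact h2

lemma genIdeal_self (b : A) : b ∈ genIdeal B b := ⟨1, sub_self B b⟩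

lemma genIdeal_nontriv {b : A} (hb : b ≠ B.zero) : genIdeal B b ≠ {B.zero} := by
  intro h
  exact hb (by have := genIdeal_self B b; rwa [h] at this)

end BCKaux

open BCKaux

theorem bck_si_with_atom_contains_L3_or_H3 {A : Type*} (B : BCK A) (I : Set A)
    (hI : B.IsIdeal I) (hInontriv : I ≠ {B.zero})
    (hImin : ∀ J : Set A, B.IsIdeal J → J ≠ {B.zero} → I ⊆ J)
    (hnotC2 : ∃ x y : A, x ≠ B.zero ∧ y ≠ B.zero ∧ x ≠ y)
    (a : A) (ha : B.IsAtom a) :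
    ∃ half one : A, half ≠ B.zero ∧ one ≠ half ∧
      B.sub half one = B.zero ∧
      (B.sub one half = half ∨ B.sub one half = one) ∧
      (∀ x ∈ ({B.zero, half, one} : Set A), ∀ y ∈ ({B.zero, half, one} : Set A),
        B.sub x y ∈ ({B.zero, half, one} : Set A)) := by
  obtain ⟨ha0, hatom⟩ := ha
  -- I has a nonzero element
  have hIne : ∃ i ∈ I, i ≠ B.zero := by
    by_contra h
    push_neg at h
    exact hInontriv (Set.eq_singleton_iff_unique_mem.mpr ⟨hI.1, fun x hx => h x hx⟩)
  obtain ⟨i, hiI, hi0⟩ := hIne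
  -- a ∈ I
  have haI : a ∈ I := by
    have hsub : I ⊆ genIdeal B a := hImin _ (genIdeal_isIdeal B a) (genIdeal_nontriv B ha0)
    obtain ⟨n, hn⟩ := hsub hiI
    clear hsub
    induction n with
    | zero => exact absurd hn hi0
    | succ n ih =>
      by_cases hj : subIter B i a n = B.zero
      · exact ih hj
      · -- subIter i a n ≤ a and nonzero, so = a; and it's in I
        rcases hatom (subIter B i a n) hn with h0 | h1
        · exact absurd h0 hj
        · have : subIter B i a n ∈ I := hI.2 _ i hiI (by rw [subIter_le_self]; exact hI.1)
          rwa [h1] at this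
  -- a is below every nonzero element
  have hbelow : ∀ b : A, b ≠ B.zero → B.sub a b = B.zero := by
    intro b hb
    obtain ⟨n, hn⟩ := hImin _ (genIdeal_isIdeal B b) (genIdeal_nontriv B hb) haI
    by_contra hab
    have hab' : B.sub a b = a := by
      rcases hatom (B.sub a b) (sub_le_self B a b) with h | h
      · exact absurd h hab
      · exact h
    have hall : ∀ m, subIter B a b m = a := by
      intro m
      induction m with
      | zero => rfl
      | succ k ih => simp only [subIter, ih, hab']
    exact ha0 ((hall n) ▸ hn)
  -- le of atom: x \ a = 0 → x ∈ {0, a} handled by hatom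
  -- find b ∉ {0, a}
  obtain ⟨x, y, hx0, hy0, hxy⟩ := hnotC2
  obtain ⟨b, hb0, hba⟩ : ∃ b : A, b ≠ B.zero ∧ b ≠ a := by
    by_cases hxa : x = a
    · exact ⟨y, hy0, fun h => hxy (by rw [hxa, h])⟩
    · exact ⟨x, hx0, hxa⟩
  -- main case analysis
  by_cases hcase : ∃ c : A, c ≠ B.zero ∧ c ≠ a ∧ (B.sub c a = a ∨ B.sub c a = c)
  · obtain ⟨c, hc0, hca, hcsub⟩ := hcase
    refine ⟨a, c, ha0, hca, hbelow c hc0, hcsub, ?_⟩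
    intro u hu v hv
    simp only [Set.mem_insert_iff, Set.mem_singleton_iff] at hu hv ⊢
    rcases hu with rfl | rfl | rfl
    · exact Or.inl (B.ax3 v)
    · rcases hv with rfl | rfl | rfl
      · exact Or.inr (Or.inl (B.ax2 _))
      · exact Or.inl (BCKaux.sub_self B _)
      · exact Or.inl (hbelow _ hc0)
    · rcases hv with rfl | rfl | rfl
      · exact Or.inr (Or.inr (B.ax2 _))
      · rcases hcsub with h | h
        · exact Or.inr (Or.inl h)
        · exact Or.inr (Or.inr h)
      · exact Or.inl (BCKaux.sub_self B _)
  · -- contradiction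
    exfalso
    push_neg at hcase
    -- for every z ∉ {0, a} : z\a ∉ {0, a, z}
    have step : ∀ z : A, z ≠ B.zero → z ≠ a →
        B.sub z a ≠ B.zero ∧ B.sub z a ≠ a ∧ B.sub z a ≠ z := by
      intro z hz0 hza
      have h1 : B.sub z a ≠ B.zero := by
        intro h
        rcases hatom z h with h' | h'
        · exact hz0 h'
        · exact hza h'
      have h2 := hcase z hz0 hza
      exact ⟨h1, h2.1, h2.2⟩
    set c := B.sub b a with hc
    obtain ⟨hc0, hca', hcb⟩ := step b hb0 hba
    -- c \ (c \ a) = a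
    have hcca : B.sub c (B.sub c a) = a := by
      rcases hatom (B.sub c (B.sub c a)) (dd B c a) with h | h
      · -- then c ≤ c\a, and c\a ≤ c, so c\a = c, contradiction
        exfalso
        have : B.sub c a = c := B.ax4 _ _ (sub_le_self B c a) h
        exact (step c hc0 hca').2.2 this
      · exact h
    -- t := b \ (c \ a); then t \ a = c \ (c\a) = a
    set t := B.sub b (B.sub c a) with ht
    have hta : B.sub t a = a := by
      rw [ht, exch B b (B.sub c a) a, ← hc]
      exact hcca
    have ht0 : t ≠ B.zero := by
      intro h
      rw [h, B.ax3] at hta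
      exact ha0 hta.symm
    have hta' : t ≠ a := by
      intro h
      rw [h, BCKaux.sub_self] at hta
      exact ha0 hta.symm
    exact (step t ht0 hta').2.1 hta
end
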